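/- For any fixed q ∈ [0,1], the function p ↦ D_H²(Ber(p), Ber(q)) is (1/4)-strongly convex on (0,1); in particular its second derivative in p is at least 1/4 for all p ∈ (0,1). -/

import Mathlib

/-! Differentiating twice, `p ↦ D_H²(Ber p, Ber q)` has second derivative
`(√q / p^{3/2} + √(1-q) / (1-p)^{3/2}) / 4 ≥ (√q + √(1-q)) / 4 ≥ 1/4` on `(0,1)`, and a second
derivative bounded below by `m` makes `f - m/2 ‖·‖²` convex. -/

open Real Set

lemma strongConvexOn_of_hasDerivWithinAt2_ge {D : Set ℝ} (hD : Convex ℝ D) {f f' f'' : ℝ → ℝ}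
    {m : ℝ} (hf : ContinuousOn f D)
    (hf' : ∀ x ∈ interior D, HasDerivWithinAt f (f' x) (interior D) x)
    (hf'' : ∀ x ∈ interior D, HasDerivWithinAt f' (f'' x) (interior D) x)
    (hm : ∀ x ∈ interior D, m ≤ f'' x) : StrongConvexOn D m f := by
  rw [strongConvexOn_iff_convex]
  refine convexOn_of_hasDerivWithinAt2_nonneg hD (f' := fun x ↦ f' x - m * x)
    (f'' := fun x ↦ f'' x - m) (hf.sub (by fun_prop)) (fun x hx ↦ ?_) (fun x hx ↦ ?_)
    (fun x hx ↦ sub_nonneg.2 (hm x hx))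
  · have hsq : HasDerivAt (fun x : ℝ ↦ m / 2 * ‖x‖ ^ 2) (m * x) x := by
      simpa only [norm_eq_abs, sq_abs] using
        ((hasDerivAt_pow 2 x).const_mul (m / 2)).congr_deriv (by ring)
    exact (hf' x hx).sub hsq.hasDerivWithinAt
  · exact (hf'' x hx).sub (((hasDerivAt_id x).const_mul m).hasDerivWithinAt.congr_deriv (by simp))

lemma hasDerivAt_sqrt_sub_sq (c : ℝ) {x : ℝ} (hx : 0 < x) :
    HasDerivAt (fun x ↦ (√x - c) ^ 2) (1 - c / √x) x := by
  have hs : √x ≠ 0 := (sqrt_pos.2 hx).ne'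
  refine (((hasDerivAt_sqrt hx.ne').sub_const c).pow 2).congr_deriv ?_
  field_simp
  ring

lemma hasDerivAt_const_div_sqrt (c : ℝ) {x : ℝ} (hx : 0 < x) :
    HasDerivAt (fun x ↦ c / √x) (-(c / (x * √x)) / 2) x := by
  have hs : √x ≠ 0 := (sqrt_pos.2 hx).ne'
  refine ((hasDerivAt_const x c).div (hasDerivAt_sqrt hx.ne') hs).congr_deriv ?_
  rw [sq_sqrt hx.le]
  field_simp
  ring

lemma one_le_sqrt_add_sqrt_one_sub (q : ℝ) : 1 ≤ √q + √(1 - q) := by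
  rcases le_total q 0 with hq0 | hq0
  · linarith [one_le_sqrt.2 (by linarith : 1 ≤ 1 - q), sqrt_nonneg q]
  rcases le_total 1 q with hq1 | hq1
  · linarith [one_le_sqrt.2 hq1, sqrt_nonneg (1 - q)]
  linarith [le_sqrt_self_iff.2 hq1, le_sqrt_self_iff.2 (by linarith : 1 - q ≤ 1)]

lemma le_div_mul_sqrt_self {a x : ℝ} (ha : 0 ≤ a) (hx₀ : 0 < x) (hx₁ : x ≤ 1) :
    a ≤ a / (x * √x) :=
  le_div_self ha (by positivity) (mul_le_one₀ hx₁ (sqrt_nonneg x) (sqrt_le_one.2 hx₁))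

noncomputable def hellingerSqBernoulli (q p : ℝ) : ℝ :=
  1 / 2 * ((√p - √q) ^ 2 + (√(1 - p) - √(1 - q)) ^ 2)

noncomputable def hellingerSqBernoulliDeriv (q p : ℝ) : ℝ :=
  1 / 2 * (√(1 - q) / √(1 - p) - √q / √p)

noncomputable def hellingerSqBernoulliDeriv2 (q p : ℝ) : ℝ :=
  1 / 4 * (√q / (p * √p) + √(1 - q) / ((1 - p) * √(1 - p)))

section

variable (q : ℝ) {p : ℝ}

lemma hasDerivAt_hellingerSqBernoulli (hp : p ∈ Ioo 0 1) :
    HasDerivAt (hellingerSqBernoulli q) (hellingerSqBernoulliDeriv q p) p := by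
  have hflip := (hasDerivAt_sqrt_sub_sq √(1 - q) (sub_pos.2 hp.2)).comp p
    ((hasDerivAt_id p).const_sub 1)
  refine (((hasDerivAt_sqrt_sub_sq √q hp.1).add hflip).const_mul (1 / 2)).congr_deriv ?_
  simp only [hellingerSqBernoulliDeriv]
  ring

lemma hasDerivAt_hellingerSqBernoulliDeriv (hp : p ∈ Ioo 0 1) :
    HasDerivAt (hellingerSqBernoulliDeriv q) (hellingerSqBernoulliDeriv2 q p) p := by
  have hflip := (hasDerivAt_const_div_sqrt √(1 - q) (sub_pos.2 hp.2)).comp p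
    ((hasDerivAt_id p).const_sub 1)
  refine ((hflip.sub (hasDerivAt_const_div_sqrt √q hp.1)).const_mul (1 / 2)).congr_deriv ?_
  simp only [hellingerSqBernoulliDeriv2]
  ring

lemma quarter_le_hellingerSqBernoulliDeriv2 (hp : p ∈ Ioo 0 1) :
    1 / 4 ≤ hellingerSqBernoulliDeriv2 q p := by
  have h₀ := le_div_mul_sqrt_self (sqrt_nonneg q) hp.1 hp.2.le
  have h₁ := le_div_mul_sqrt_self (sqrt_nonneg (1 - q)) (sub_pos.2 hp.2)
    (sub_le_self 1 hp.1.le)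
  unfold hellingerSqBernoulliDeriv2
  linarith [one_le_sqrt_add_sqrt_one_sub q]

end

theorem hellinger_bernoulli_strongly_convex_general (q : ℝ) :
    StrongConvexOn (Set.Ioo (0 : ℝ) 1) (1 / 4)
      (fun p => (1 / 2) * ((Real.sqrt p - Real.sqrt q) ^ 2 +
        (Real.sqrt (1 - p) - Real.sqrt (1 - q)) ^ 2)) ∧
    ∀ p ∈ Set.Ioo (0 : ℝ) 1,
      (1 / 4 : ℝ) ≤ deriv (deriv (fun p => (1 / 2) * ((Real.sqrt p - Real.sqrt q) ^ 2 +
        (Real.sqrt (1 - p) - Real.sqrt (1 - q)) ^ 2))) p := by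
  change StrongConvexOn _ _ (hellingerSqBernoulli q) ∧
    ∀ p ∈ Ioo (0 : ℝ) 1, 1 / 4 ≤ deriv (deriv (hellingerSqBernoulli q)) p
  have hD := fun p hp ↦ hasDerivAt_hellingerSqBernoulli q (p := p) hp
  have hD2 := fun p hp ↦ hasDerivAt_hellingerSqBernoulliDeriv q (p := p) hp
  refine ⟨?_, fun p hp ↦ ?_⟩
  · refine strongConvexOn_of_hasDerivWithinAt2_ge (convex_Ioo 0 1)
      (f' := hellingerSqBernoulliDeriv q) (f'' := hellingerSqBernoulliDeriv2 q)
      (fun p hp ↦ (hD p hp).continuousAt.continuousWithinAt) ?_ ?_ ?_ <;>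
      rw [interior_Ioo]
    · exact fun p hp ↦ (hD p hp).hasDerivWithinAt
    · exact fun p hp ↦ (hD2 p hp).hasDerivWithinAt
    · exact fun p hp ↦ quarter_le_hellingerSqBernoulliDeriv2 q hp
  · have hderiv : deriv (hellingerSqBernoulli q) =ᶠ[nhds p] hellingerSqBernoulliDeriv q :=
      (isOpen_Ioo.eventually_mem hp).mono fun x hx ↦ (hD x hx).deriv
    rw [hderiv.deriv_eq, (hD2 p hp).deriv]
    exact quarter_le_hellingerSqBernoulliDeriv2 q hp

/-- For fixed q ∈ [0,1], the function
p ↦ D_H²(Ber(p),Ber(q)) = (1/2)((√p−√q)² + (√(1−p)−√(1−q))²) is (1/4)-strongly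
convex on (0,1); in particular its second derivative is at least 1/4 on (0,1). -/
theorem hellinger_bernoulli_strongly_convex (q : ℝ) (hq : q ∈ Set.Icc (0 : ℝ) 1) :
    StrongConvexOn (Set.Ioo (0 : ℝ) 1) (1 / 4)
      (fun p => (1 / 2) * ((Real.sqrt p - Real.sqrt q) ^ 2 +
        (Real.sqrt (1 - p) - Real.sqrt (1 - q)) ^ 2)) ∧
    ∀ p ∈ Set.Ioo (0 : ℝ) 1,
      (1 / 4 : ℝ) ≤ deriv (deriv (fun p => (1 / 2) * ((Real.sqrt p - Real.sqrt q) ^ 2 +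
        (Real.sqrt (1 - p) - Real.sqrt (1 - q)) ^ 2))) p :=
  hellinger_bernoulli_strongly_convex_general q
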